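/- For every t > 0, (1/(2π)) · ∫_{ℝ²} t·e^{−100|y|²} / (|y|² + t²)^{3/2} dy = 1 − 10·√π · t · e^{100 t²} · erfc(10 t), where erfc(z) = (2/√π)·∫_z^∞ e^{−r²} dr is the complementary error function. -/

import Mathlib

/-!
In polar coordinates the integral is `2π t ∫₀^∞ r e^{-c²r²} (r² + t²)^(-3/2) dr` with `c = 10`.
This one-dimensional integrand has an explicit antiderivative built from `erfc`, vanishing at
infinity, so the integral is minus its value at `r = 0`.
-/

open MeasureTheory Set Real

/-- The complementary error function `erfc(z) = (2/√π) ∫_z^∞ e^{−r²} dr`. -/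
noncomputable def erfc (z : ℝ) : ℝ :=
  (2 / Real.sqrt Real.pi) * ∫ r in Set.Ioi z, Real.exp (-r ^ 2)

open Filter Topology

section Tail

variable {E : Type*} [NormedAddCommGroup E] [NormedSpace ℝ E] {f : ℝ → E}

theorem hasDerivAt_integral_Ioi [CompleteSpace E] (hf : Integrable f) {z : ℝ}
    (hz : ContinuousAt f z) : HasDerivAt (fun u => ∫ x in Ioi u, f x) (-f z) z := by
  have htail : (fun u => ∫ x in Ioi u, f x) = fun u => (∫ x in Ioi z, f x) - ∫ x in z..u, f x :=
    funext fun u => by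
      rw [← intervalIntegral.integral_Ioi_sub_Ioi' hf.integrableOn hf.integrableOn, sub_sub_cancel]
  rw [htail]
  simpa using (intervalIntegral.integral_hasDerivAt_right hf.intervalIntegrable
    hf.aestronglyMeasurable.stronglyMeasurableAtFilter hz).const_sub (∫ x in Ioi z, f x)

theorem tendsto_integral_Ioi_atTop (hf : Integrable f) :
    Tendsto (fun u => ∫ x in Ioi u, f x) atTop (𝓝 0) := by
  have hempty : ⋂ u : ℝ, Ioi u = ∅ := iInter_eq_empty_iff.mpr fun x => ⟨x, lt_irrefl x⟩
  simpa [hempty] using tendsto_setIntegral_of_antitone (fun u => measurableSet_Ioi)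
    (fun _ _ h => Ioi_subset_Ioi h) ⟨0, hf.integrableOn⟩

end Tail

theorem integrable_exp_neg_sq : Integrable fun x : ℝ => exp (-x ^ 2) := by
  simpa using integrable_exp_neg_mul_sq one_pos

theorem hasDerivAt_erfc (z : ℝ) : HasDerivAt erfc (-(2 / √π * exp (-z ^ 2))) z := by
  rw [← mul_neg]
  exact (hasDerivAt_integral_Ioi integrable_exp_neg_sq (by fun_prop)).const_mul _

theorem tendsto_erfc_atTop : Tendsto erfc atTop (𝓝 0) := by
  have h := (tendsto_integral_Ioi_atTop integrable_exp_neg_sq).const_mul (2 / √π)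
  rwa [mul_zero] at h

theorem rpow_three_halves_eq_mul_sqrt {x : ℝ} (hx : 0 ≤ x) : x ^ ((3 : ℝ) / 2) = x * √x := by
  rw [sqrt_eq_rpow, show (3 : ℝ) / 2 = 1 + 1 / 2 by norm_num, rpow_add' hx (by norm_num), rpow_one]

/-- Integrating by parts against `d/dr (-(r² + t²)^(-1/2))` leaves `2c² r e^{-c²r²} / √(r² + t²)`,
which the substitution `s = c √(r² + t²)` turns into a Gaussian tail. -/
theorem hasDerivAt_erfc_antideriv (c : ℝ) {t : ℝ} (ht : t ≠ 0) (r : ℝ) :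
    HasDerivAt (fun r => c * √π * exp (c ^ 2 * t ^ 2) * erfc (c * √(r ^ 2 + t ^ 2))
        - exp (-c ^ 2 * r ^ 2) / √(r ^ 2 + t ^ 2))
      (r * exp (-c ^ 2 * r ^ 2) / (r ^ 2 + t ^ 2) ^ ((3 : ℝ) / 2)) r := by
  have hP : 0 < r ^ 2 + t ^ 2 := by positivity
  have hS : 0 < √(r ^ 2 + t ^ 2) := sqrt_pos.mpr hP
  have hsqrt : HasDerivAt (fun r => √(r ^ 2 + t ^ 2)) (r / √(r ^ 2 + t ^ 2)) r := by
    convert ((hasDerivAt_pow 2 r).add_const (t ^ 2)).sqrt hP.ne' using 1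
    field_simp
    ring
  have herfc := (hasDerivAt_erfc (c * √(r ^ 2 + t ^ 2))).comp r (hsqrt.const_mul c)
  have hexp : HasDerivAt (fun r => exp (-c ^ 2 * r ^ 2))
      (exp (-c ^ 2 * r ^ 2) * (-c ^ 2 * (2 * r))) r := by
    simpa using ((hasDerivAt_pow 2 r).const_mul (-c ^ 2)).exp
  refine ((herfc.const_mul (c * √π * exp (c ^ 2 * t ^ 2))).sub
    (hexp.div hsqrt hS.ne')).congr_deriv ?_
  have hgauss :
      exp (-(c * √(r ^ 2 + t ^ 2)) ^ 2) = exp (-c ^ 2 * r ^ 2) / exp (c ^ 2 * t ^ 2) := by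
    rw [← exp_sub, mul_pow, sq_sqrt hP.le]
    ring_nf
  rw [hgauss, rpow_three_halves_eq_mul_sqrt hP.le]
  field_simp
  rw [sq_sqrt hP.le]
  ring

theorem integral_Ioi_mul_exp_neg_sq_div_rpow {c t : ℝ} (hc : 0 < c) (ht : 0 < t) :
    ∫ r in Ioi 0, r * exp (-c ^ 2 * r ^ 2) / (r ^ 2 + t ^ 2) ^ ((3 : ℝ) / 2) =
      t⁻¹ - c * √π * exp (c ^ 2 * t ^ 2) * erfc (c * t) := by
  have hsqrt : Tendsto (fun r : ℝ => √(r ^ 2 + t ^ 2)) atTop atTop :=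
    tendsto_sqrt_atTop.comp (tendsto_atTop_add_const_right _ _ (tendsto_pow_atTop two_ne_zero))
  have hexp : Tendsto (fun r : ℝ => exp (-c ^ 2 * r ^ 2)) atTop (𝓝 0) :=
    tendsto_exp_atBot.comp ((tendsto_pow_atTop two_ne_zero).const_mul_atTop_of_neg
      (by nlinarith))
  have hlim := ((tendsto_erfc_atTop.comp (hsqrt.const_mul_atTop hc)).const_mul
    (c * √π * exp (c ^ 2 * t ^ 2))).sub (hexp.div_atTop hsqrt)
  rw [mul_zero, sub_zero] at hlim
  rw [integral_Ioi_of_hasDerivAt_of_nonneg' (fun r _ => hasDerivAt_erfc_antideriv c ht.ne' r)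
    (fun r hr => by have : 0 < r := hr; positivity) hlim]
  simp [sqrt_sq ht.le]

theorem integral_norm_euclideanSpace_fin_two {F : Type*} [NormedAddCommGroup F] [NormedSpace ℝ F]
    (g : ℝ → F) : ∫ y : EuclideanSpace ℝ (Fin 2), g ‖y‖ = (2 * π) • ∫ r in Ioi 0, r • g r := by
  rw [integral_fun_norm_addHaar]
  simp [measureReal_def, pi_pos.le, mul_smul, ofNat_smul_eq_nsmul]

theorem fractional_heat_gaussian_center_value (t : ℝ) (ht : 0 < t) :
    (1 / (2 * Real.pi)) *
      ∫ y : EuclideanSpace ℝ (Fin 2),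
        t * Real.exp (-100 * ‖y‖ ^ 2) / (‖y‖ ^ 2 + t ^ 2) ^ ((3 : ℝ) / 2) =
    1 - 10 * Real.sqrt Real.pi * t * Real.exp (100 * t ^ 2) * erfc (10 * t) := by
  set g : ℝ → ℝ := fun r => t * exp (-100 * r ^ 2) / (r ^ 2 + t ^ 2) ^ ((3 : ℝ) / 2)
  have hradial : ∫ r in Ioi 0, r • g r =
      t * ∫ r in Ioi 0, r * exp (-10 ^ 2 * r ^ 2) / (r ^ 2 + t ^ 2) ^ ((3 : ℝ) / 2) := by
    rw [← integral_const_mul]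
    norm_num [g, mul_div_assoc, mul_left_comm]
  rw [integral_norm_euclideanSpace_fin_two g, hradial,
    integral_Ioi_mul_exp_neg_sq_div_rpow (by norm_num) ht, smul_eq_mul]
  field_simp
  norm_num
  ring
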